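/- arXiv:2011.01467 — 5 statements merged into one kernel-verified Lean document; each statement's English description precedes it below -/
import Mathlib

section
/- Let n be even and k ≥ 2. Then the polynomial F_{n,k}(q) = [n+k choose k]_q − q^n [n+k−2 choose k−2]_q has nonnegative coefficients; equivalently, for all m with n ≤ m ≤ nk, p(k,n,m) ≥ p(k−2,n,m−n). -/
/-- Number of partitions of `m` with at most `k` parts, each part at most `n`
(partitions contained in a `k × n` rectangle). -/
def p (k n m : ℕ) : ℕ :=
  Fintype.card {π : Nat.Partition m // π.parts.card ≤ k ∧ ∀ j ∈ π.parts, j ≤ n}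

/-- Reiner–Stanton: for even $n$ and $k ≥ 2$, the coefficients of
$F_{n,k}(q) = [n+k,k]_q - q^n [n+k-2,k-2]_q$ are nonnegative, i.e.
$p(k,n,m) ≥ p(k-2,n,m-n)$ for $n ≤ m ≤ nk$. -/
theorem F_nonneg (n k : ℕ) (hn : Even n) (hk : 2 ≤ k) :
    ∀ m : ℕ, n ≤ m → m ≤ n * k → p (k - 2) n (m - n) ≤ p k n m := by
  intro m hm hmk
  unfold p
  rcases Nat.eq_zero_or_pos n with h0 | h0
  · subst h0
    have hm0 : m = 0 := by omega
    subst hm0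
    refine Fintype.card_le_of_injective (fun x => ⟨x.1, by omega, x.2.2⟩) ?_
    intro a b hab
    simpa [Subtype.ext_iff] using hab
  · obtain ⟨h, hhn⟩ := hn
    have hhpos : 0 < h := by omega
    refine Fintype.card_le_of_injective (fun x =>
      ⟨{ parts := x.1.parts + Multiset.replicate 2 h,
         parts_pos := ?_,
         parts_sum := ?_ }, ?_, ?_⟩) ?_
    · intro j hj
      rcases Multiset.mem_add.mp hj with hj | hj
      · exact x.1.parts_pos hj
      · rw [Multiset.eq_of_mem_replicate hj]; exact hhpos
    · have hs := x.1.parts_sum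
      rw [Multiset.sum_add, Multiset.sum_replicate]
      simp only [smul_eq_mul] at *
      omega
    · have hc := x.2.1
      rw [Multiset.card_add, Multiset.card_replicate]
      omega
    · intro j hj
      rcases Multiset.mem_add.mp hj with hj | hj
      · exact x.2.2 j hj
      · rw [Multiset.eq_of_mem_replicate hj]; omega
    · intro a b hab
      have := congrArg (fun y => y.1.parts) hab
      simp only at this
      have hparts : a.1.parts = b.1.parts := by
        exact add_right_cancel this
      exact Subtype.ext (Nat.Partition.ext hparts)
end

section
/- Let n be even, k ≥ 2, and n ≤ m ≤ nk/2. Then p(k,n,m) − p(k,n,m−1) ≥ p(k−2,n,m−n) − p(k−2,n,m−n−1), where p(k,n,−1) = 0 by convention. -/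
/-- `p` extended to integer `m`, with value `0` for negative `m`. -/
def pZ (k n : ℕ) (m : ℤ) : ℕ := if 0 ≤ m then p k n m.toNat else 0

/-!
The monomials `∏ xᵢ ^ σᵢ` of `ℚ[x₀, …, xₙ]` of degree `k` and weight `∑ i σᵢ = m` correspond to
the partitions of `m` into at most `k` parts of size at most `n` (the part `i` occurs `σᵢ` times,
`σ₀` counts the missing parts), so `p(k, n, m)` is the dimension of the weight space `V(k, m)`.
The derivations `E xᵢ = i xᵢ₋₁` and `F xᵢ = (n - i) xᵢ₊₁` satisfy `[E, F] = nk - 2m` on `V(k, m)`.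
From this commutator, `E ^ (j + 1) F v = F E ^ (j + 1) v + (j + 1)(nk - 2m + j) E ^ j v`, and since
`E` is nilpotent, `E F v = 0` forces `v = 0` when `2m < nk`; so `E F` is bijective on
`V(k, m - 1)` for `2m ≤ nk`, `E : V(k, m) → V(k, m - 1)` is onto and
`p(k, n, m) - p(k, n, m - 1) = dim ker E|V(k, m)`.
Multiplication by the invariant quadric `Q = ∑ (-1)ⁱ (n choose i) xᵢ xₙ₋ᵢ`, which is nonzero for
even `n`, maps `ker E|V(k - 2, m - n)` injectively into `ker E|V(k, m)`, and by rank-nullity the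
former has dimension at least `p(k - 2, n, m - n) - p(k - 2, n, m - n - 1)`.
-/

open MvPolynomial
open Module (finrank)

theorem Finsupp.weight_eq_sum_map_toMultiset {σ M : Type*} [AddCommMonoid M] (w : σ → M)
    (f : σ →₀ ℕ) : Finsupp.weight w f = ((Finsupp.toMultiset f).map w).sum := by
  induction f using Finsupp.induction_linear with
  | zero => simp
  | add f g hf hg => simp [hf, hg]
  | single i r => simp [Finsupp.weight_single, Multiset.map_nsmul, Multiset.sum_nsmul]

namespace MvPolynomial.IsWeightedHomogeneous

variable {σ R M : Type*} [CommSemiring R] [AddCommMonoid M] {w : σ → M}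
  {p : MvPolynomial σ R} {m : M}

theorem derivation_apply (D : Derivation R (MvPolynomial σ R) (MvPolynomial σ R)) {δ : M}
    (hD : ∀ i, (D (X i)).IsWeightedHomogeneous w (w i + δ))
    (hp : p.IsWeightedHomogeneous w m) : (D p).IsWeightedHomogeneous w (m + δ) := by
  have hD' : mkDerivation R (fun i => D (X i)) = D := derivation_ext fun i => mkDerivation_X ..
  induction hp using IsWeightedHomogeneous.induction_on with
  | zero => simpa using isWeightedHomogeneous_zero R w (m + δ)
  | add p q _ _ hp hq => simpa using hp.add hq
  | monomial d r hd =>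
    rw [← hD', mkDerivation_monomial, Finsupp.sum]
    refine Submodule.smul_mem (weightedHomogeneousSubmodule R w _) r
      (Submodule.sum_mem _ fun i hi => ?_)
    rw [smul_eq_mul, ← hd, ← Finsupp.weight_sub_single_add (Finsupp.mem_support_iff.mp hi),
      add_assoc]
    exact (isWeightedHomogeneous_monomial _ _ _ rfl).mul (hD i)

theorem derivation_apply_eq_smul (D : Derivation R (MvPolynomial σ R) (MvPolynomial σ R))
    (ℓ : M →+ R) (hD : ∀ i, D (X i) = ℓ (w i) • X i) (hp : p.IsWeightedHomogeneous w m) :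
    D p = ℓ m • p := by
  have hD' : mkDerivation R (fun i => D (X i)) = D := derivation_ext fun i => mkDerivation_X ..
  induction hp using IsWeightedHomogeneous.induction_on with
  | zero => simp
  | add p q _ _ hp hq => rw [map_add, hp, hq, smul_add]
  | monomial d r hd =>
    have hterm : ∀ i ∈ d.support,
        monomial (d - Finsupp.single i 1) (d i : R) • D (X i) = ℓ (d i • w i) • monomial d 1 := by
      intro i hi
      rw [hD, smul_eq_mul, mul_smul_comm, X, monomial_mul,
        Finsupp.sub_add_single_one_cancel (Finsupp.mem_support_iff.mp hi), map_nsmul,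
        nsmul_eq_mul, smul_monomial, smul_monomial]
      simp [mul_comm]
    rw [Finsupp.weight_apply, Finsupp.sum] at hd
    rw [← hD', mkDerivation_monomial, Finsupp.sum, Finset.sum_congr rfl hterm,
      ← Finset.sum_smul, ← map_sum, hd, smul_comm, smul_monomial, smul_eq_mul, mul_one]

end MvPolynomial.IsWeightedHomogeneous

theorem pow_apply_mem_of_mapsTo {R V : Type*} [Semiring R] [AddCommMonoid V] [Module R V]
    (e : Module.End R V) (W : ℤ → Submodule R V) (he : ∀ c, ∀ x ∈ W c, e x ∈ W (c - 1))
    {c : ℤ} {v : V} (hv : v ∈ W c) (j : ℕ) : (e ^ j) v ∈ W (c - j) := by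
  induction j with
  | zero => simpa using hv
  | succ j ih =>
    rw [pow_succ', Module.End.mul_apply, Nat.cast_succ, ← sub_sub]
    exact he _ _ ih

section GradedSl2

variable {K V : Type*} [Field K] [LinearOrder K] [IsStrictOrderedRing K]
  [AddCommGroup V] [Module K V] (e f : Module.End K V) (W : ℤ → Submodule K V) (N : K)

theorem pow_succ_apply_f (he : ∀ c, ∀ x ∈ W c, e x ∈ W (c - 1))
    (hef : ∀ c, ∀ x ∈ W c, e (f x) - f (e x) = (N - 2 * c) • x) {c : ℤ} {v : V} (hv : v ∈ W c)
    (j : ℕ) : (e ^ (j + 1)) (f v) =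
      f ((e ^ (j + 1)) v) + ((j + 1) * (N - 2 * c + j) : K) • (e ^ j) v := by
  induction j with
  | zero =>
    simpa [sub_eq_iff_eq_add'] using hef c v hv
  | succ j ih =>
    have hpow : ∀ i x, e ((e ^ i) x) = (e ^ (i + 1)) x := fun i x => by
      rw [pow_succ', Module.End.mul_apply]
    have hw := hef _ _ (pow_apply_mem_of_mapsTo e W he hv (j + 1))
    rw [sub_eq_iff_eq_add'] at hw
    rw [← hpow, ih, map_add, map_smul, hw, hpow, hpow, add_assoc, ← add_smul]
    congr 2
    push_cast
    ring

theorem eq_zero_of_apply_f_eq_zero (he : ∀ c, ∀ x ∈ W c, e x ∈ W (c - 1))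
    (hef : ∀ c, ∀ x ∈ W c, e (f x) - f (e x) = (N - 2 * c) • x) (hW : ∀ c < 0, W c = ⊥)
    {c : ℤ} (hc : 2 * c < N) {v : V} (hv : v ∈ W c) (hefv : e (f v) = 0) : v = 0 := by
  have step : ∀ j : ℕ, (e ^ (j + 1)) v = 0 → (e ^ j) v = 0 := fun j hj => by
    have hchain := pow_succ_apply_f e f W N he hef hv j
    rw [hj, map_zero, zero_add, pow_succ, Module.End.mul_apply, hefv, map_zero, eq_comm,
      smul_eq_zero] at hchain
    refine hchain.resolve_left (mul_ne_zero (by positivity) ?_)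
    have : (0 : K) ≤ j := Nat.cast_nonneg j
    linarith
  have descend : ∀ j : ℕ, (e ^ j) v = 0 → v = 0 := fun j => by
    induction j with
    | zero => simp
    | succ j ih => exact fun h => ih (step j h)
  refine descend (c + 1).toNat ?_
  have := pow_apply_mem_of_mapsTo e W he hv (c + 1).toNat
  rwa [hW _ (by omega), Submodule.mem_bot] at this

theorem surjOn_of_commutator_eq_smul (he : ∀ c, ∀ x ∈ W c, e x ∈ W (c - 1))
    (hf : ∀ c, ∀ x ∈ W c, f x ∈ W (c + 1))
    (hef : ∀ c, ∀ x ∈ W c, e (f x) - f (e x) = (N - 2 * c) • x) (hW : ∀ c < 0, W c = ⊥)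
    {c : ℤ} [FiniteDimensional K (W c)] (hc : 2 * c < N) :
    Set.SurjOn e (W (c + 1)) (W c) := by
  have hmaps : ∀ x ∈ W c, (e * f) x ∈ W c := fun x hx => by
    simpa using he _ _ (hf c x hx)
  have hinj : Function.Injective ((e * f).restrict hmaps) := by
    rw [← LinearMap.ker_eq_bot, LinearMap.ker_eq_bot']
    intro x hx
    exact Subtype.ext (eq_zero_of_apply_f_eq_zero e f W N he hef hW hc x.2
      (congrArg Subtype.val hx))
  intro y hy
  obtain ⟨x, hx⟩ := LinearMap.injective_iff_surjective.mp hinj ⟨y, hy⟩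
  exact ⟨f x, hf c x x.2, congrArg Subtype.val hx⟩

end GradedSl2

noncomputable section

namespace Sl2

abbrev Poly (n : ℕ) := MvPolynomial (Fin (n + 1)) ℚ

def bideg (n : ℕ) (i : Fin (n + 1)) : ℕ × ℤ := (1, i)

abbrev weightSpace (n k : ℕ) (c : ℤ) : Submodule ℚ (Poly n) :=
  weightedHomogeneousSubmodule ℚ (bideg n) (k, c)

variable {n k : ℕ} {c : ℤ} {x : Poly n}

theorem weight_bideg (σ : Fin (n + 1) →₀ ℕ) :
    Finsupp.weight (bideg n) σ =
      (Multiset.card (Finsupp.toMultiset σ), (((Finsupp.toMultiset σ).map Fin.val).sum : ℤ)) := by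
  rw [Finsupp.weight_eq_sum_map_toMultiset]
  induction Finsupp.toMultiset σ using Multiset.induction_on with
  | empty => rfl
  | cons i s ih => simp [ih, bideg, add_comm]

variable (n k) in
def weightEquivMultiset (c : ℤ) :
    {σ : Fin (n + 1) →₀ ℕ // Finsupp.weight (bideg n) σ = (k, c)} ≃
      {s : Multiset (Fin (n + 1)) // Multiset.card s = k ∧ ((s.map Fin.val).sum : ℤ) = c} :=
  Multiset.toFinsupp.symm.toEquiv.subtypeEquiv fun σ => by simp [weight_bideg]

theorem map_val_map_ofNat {s : Multiset ℕ} (hs : ∀ j ∈ s, j ≤ n) :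
    (s.map (Fin.ofNat (n + 1))).map Fin.val = s := by
  rw [Multiset.map_map]
  conv_rhs => rw [← Multiset.map_id s]
  exact Multiset.map_congr rfl fun j hj => by
    simp [Nat.mod_eq_of_lt (Nat.lt_succ_of_le (hs j hj))]

variable (n k) in
def multisetEquivPartition (m : ℕ) :
    {s : Multiset (Fin (n + 1)) // Multiset.card s = k ∧ ((s.map Fin.val).sum : ℤ) = m} ≃
      {π : m.Partition // Multiset.card π.parts ≤ k ∧ ∀ j ∈ π.parts, j ≤ n} where
  toFun s := ⟨.ofSums m (s.1.map Fin.val) (by exact_mod_cast s.2.2),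
    s.2.1 ▸ (Multiset.card_le_card (Multiset.filter_le _ _)).trans (Multiset.card_map _ _).le,
    by
      simp only [Nat.Partition.ofSums_parts, Multiset.mem_filter, Multiset.mem_map]
      rintro _ ⟨⟨i, -, rfl⟩, -⟩
      exact i.is_le⟩
  invFun π := ⟨π.1.parts.map (Fin.ofNat (n + 1)) +
      Multiset.replicate (k - Multiset.card π.1.parts) 0, by
      simp [π.2.1], by
      rw [Multiset.map_add, map_val_map_ofNat π.2.2]
      simp [π.1.parts_sum]⟩
  left_inv s := by
    obtain ⟨s, hcard, -⟩ := s
    refine Subtype.ext ?_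
    simp only [Nat.Partition.ofSums_parts, Multiset.filter_map, Multiset.map_map,
      Multiset.card_map, Function.comp_def, Fin.ofNat_val_eq_self, Multiset.map_id']
    conv_rhs => rw [← Multiset.filter_add_not (fun i : Fin (n + 1) => i.val ≠ 0) s]
    congr 1
    refine (Multiset.eq_replicate.mpr ⟨?_, fun i hi => ?_⟩).symm
    · have := congrArg Multiset.card
        (Multiset.filter_add_not (fun i : Fin (n + 1) => i.val ≠ 0) s)
      rw [Multiset.card_add] at this
      omega
    · exact Fin.ext (by simpa using (Multiset.mem_filter.mp hi).2)
  right_inv π := by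
    refine Subtype.ext (Nat.Partition.ext ?_)
    simp only [Nat.Partition.ofSums_parts, Multiset.map_add, map_val_map_ofNat π.2.2,
      Multiset.map_replicate, Fin.val_zero, Multiset.filter_add]
    rw [Multiset.filter_eq_self.mpr fun j hj => (π.1.parts_pos hj).ne',
      Multiset.filter_eq_nil.mpr fun a ha => by simp [Multiset.eq_of_mem_replicate ha], add_zero]

variable (n k) in
theorem card_weight_eq_pZ (c : ℤ) :
    Nat.card {σ : Fin (n + 1) →₀ ℕ // Finsupp.weight (bideg n) σ = (k, c)} = pZ k n c := by
  rw [Nat.card_congr (weightEquivMultiset n k c)]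
  by_cases hc : 0 ≤ c
  · lift c to ℕ using hc with m
    rw [Nat.card_congr (multisetEquivPartition n k m), Nat.card_eq_fintype_card]
    simp [pZ, p]
  · have : IsEmpty {s : Multiset (Fin (n + 1)) // Multiset.card s = k ∧
        ((s.map Fin.val).sum : ℤ) = c} := ⟨fun s => hc (s.2.2 ▸ Nat.cast_nonneg _)⟩
    rw [Nat.card_of_isEmpty, pZ, if_neg hc]

theorem finite_setOf_weight_eq (c : ℤ) :
    {σ : Fin (n + 1) →₀ ℕ | Finsupp.weight (bideg n) σ = (k, c)}.Finite :=
  (Finsupp.finite_of_degree_eq k).subset fun σ hσ => by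
    have := congrArg Prod.fst hσ
    simpa [weight_bideg, Finsupp.card_toMultiset, Finsupp.degree_apply, Finsupp.sum] using this

variable (n k) in
theorem finrank_weightSpace (c : ℤ) : finrank ℚ (weightSpace n k c) = pZ k n c := by
  rw [weightSpace, weightedHomogeneousSubmodule_eq_finsupp_supported]
  exact (Module.finrank_eq_nat_card_basis (basisRestrictSupport ℚ _)).trans
    (card_weight_eq_pZ n k c)

instance (c : ℤ) : FiniteDimensional ℚ (weightSpace n k c) := by
  rw [weightSpace, weightedHomogeneousSubmodule_eq_finsupp_supported]
  have := (finite_setOf_weight_eq (n := n) (k := k) c).to_subtype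
  exact Module.Finite.of_basis (basisRestrictSupport ℚ _)

theorem weightSpace_eq_bot_of_neg (hc : c < 0) : weightSpace n k c = ⊥ :=
  Submodule.finrank_eq_zero.mp (by rw [finrank_weightSpace, pZ, if_neg (not_le.mpr hc)])

-- `i - 1` and `i + 1` wrap around in `Fin (n + 1)`, exactly where their coefficient vanishes.
def E (n : ℕ) : Derivation ℚ (Poly n) (Poly n) :=
  mkDerivation ℚ fun i => (i.val : ℚ) • X (i - 1)

def F (n : ℕ) : Derivation ℚ (Poly n) (Poly n) :=
  mkDerivation ℚ fun i => ((n : ℚ) - i.val) • X (i + 1)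

def H (n : ℕ) : Derivation ℚ (Poly n) (Poly n) :=
  mkDerivation ℚ fun i => ((n : ℚ) - 2 * i.val) • X i

theorem E_X (i : Fin (n + 1)) : E n (X i) = (i.val : ℚ) • X (i - 1) := mkDerivation_X ..

theorem F_X (i : Fin (n + 1)) : F n (X i) = ((n : ℚ) - i.val) • X (i + 1) := mkDerivation_X ..

theorem E_mem_weightSpace (hx : x ∈ weightSpace n k c) : E n x ∈ weightSpace n k (c - 1) := by
  have := IsWeightedHomogeneous.derivation_apply (E n) (δ := (0, -1)) (fun i => by
    rw [E_X]
    rcases eq_or_ne i 0 with rfl | hi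
    · simpa using isWeightedHomogeneous_zero ℚ (bideg n) _
    refine Submodule.smul_mem (weightedHomogeneousSubmodule ℚ _ _) _ ?_
    have hi' : 1 ≤ i.val := Nat.one_le_iff_ne_zero.mpr (Fin.val_ne_zero_iff.mpr hi)
    have hw : bideg n i + (0, -1) = bideg n (i - 1) := by
      rw [bideg, bideg, Fin.coe_sub_one, if_neg hi, Nat.cast_sub hi', Prod.mk_add_mk, add_zero,
        Nat.cast_one, sub_eq_add_neg]
    exact hw ▸ isWeightedHomogeneous_X ℚ (bideg n) (i - 1)) hx
  simpa [sub_eq_add_neg] using this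

theorem F_mem_weightSpace (hx : x ∈ weightSpace n k c) : F n x ∈ weightSpace n k (c + 1) := by
  have := IsWeightedHomogeneous.derivation_apply (F n) (δ := (0, 1)) (fun i => by
    rw [F_X]
    rcases eq_or_ne i (Fin.last n) with rfl | hi
    · simpa using isWeightedHomogeneous_zero ℚ (bideg n) _
    refine Submodule.smul_mem (weightedHomogeneousSubmodule ℚ _ _) _ ?_
    have hw : bideg n i + (0, 1) = bideg n (i + 1) := by
      simp [bideg, Fin.val_add_one, hi]
    exact hw ▸ isWeightedHomogeneous_X ℚ (bideg n) (i + 1)) hx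
  simpa using this

theorem lie_E_F : ⁅E n, F n⁆ = H n := by
  refine derivation_ext fun i => ?_
  rw [Derivation.commutator_apply, F_X, E_X, Derivation.map_smul, Derivation.map_smul, E_X, F_X,
    H, mkDerivation_X, add_sub_cancel_right, sub_add_cancel, smul_smul, smul_smul, ← sub_smul]
  congr 1
  rcases eq_or_ne i (Fin.last n) with rfl | hl
  · rcases eq_or_ne n 0 with rfl | hn
    · simp
    simp [Fin.coe_sub_one, Fin.ext_iff, hn, Nat.cast_sub (Nat.one_le_iff_ne_zero.mpr hn)]
    ring
  rw [Fin.val_add_one, if_neg hl]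
  rcases eq_or_ne i 0 with rfl | h0
  · simp
  have h1 : 1 ≤ i.val := Nat.one_le_iff_ne_zero.mpr (Fin.val_ne_zero_iff.mpr h0)
  simp [Fin.coe_sub_one, h0, Nat.cast_sub h1]
  ring

theorem H_apply_of_mem (hx : x ∈ weightSpace n k c) : H n x = ((n : ℚ) * k - 2 * c) • x :=
  IsWeightedHomogeneous.derivation_apply_eq_smul (H n)
    (AddMonoidHom.mk' (fun a : ℕ × ℤ => (n : ℚ) * a.1 - 2 * a.2) fun a b => by
      simp only [Prod.fst_add, Prod.snd_add]
      push_cast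
      ring)
    (fun i => by simp [H, bideg]) hx

theorem E_F_sub_F_E (hx : x ∈ weightSpace n k c) :
    E n (F n x) - F n (E n x) = ((n : ℚ) * k - 2 * c) • x := by
  rw [← Derivation.commutator_apply, lie_E_F, H_apply_of_mem hx]

def quadric (n : ℕ) : Poly n :=
  ∑ i : Fin (n + 1), ((-1) ^ i.val * (n.choose i : ℚ)) • (X i * X i.rev)

theorem quadric_mem_weightSpace : quadric n ∈ weightSpace n 2 n :=
  Submodule.sum_mem _ fun i _ => Submodule.smul_mem _ _ <| by
    have hw : bideg n i + bideg n i.rev = (2, (n : ℤ)) := by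
      ext
      · rfl
      · simp [bideg]; omega
    rw [weightSpace, ← hw]
    exact (isWeightedHomogeneous_X ℚ _ i).mul (isWeightedHomogeneous_X ℚ _ i.rev)

theorem E_quadric : E n (quadric n) = 0 := by
  set a : Fin (n + 1) → ℚ := fun i => (-1) ^ i.val * n.choose i with ha
  have hcoeff : ∀ j : Fin (n + 1), a j * j.rev.val + a (j + 1) * (j + 1).val = 0 := fun j => by
    rcases eq_or_ne j (Fin.last n) with rfl | hj
    · simp
    have hchoose := congrArg (Nat.cast (R := ℚ)) (Nat.choose_succ_right_eq n j)
    have hrev : (j.rev.val : ℚ) = n - j := by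
      rw [eq_sub_iff_add_eq, ← Nat.cast_add, Fin.rev_add_cast]
    push_cast [Nat.cast_sub j.is_le] at hchoose
    simp only [ha, Fin.val_add_one, if_neg hj, hrev, pow_succ]
    push_cast
    linear_combination (-(-1) ^ j.val) * hchoose
  have hexpand : E n (quadric n) = ∑ i, (a i * i.rev.val) • (X i * X (i.rev - 1)) +
      ∑ i, (a i * i.val) • (X (i - 1) * X i.rev) := by
    rw [quadric, map_sum, ← Finset.sum_add_distrib]
    refine Finset.sum_congr rfl fun i _ => ?_
    rw [Derivation.map_smul, Derivation.leibniz, E_X, E_X, smul_eq_mul, smul_eq_mul,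
      mul_smul_comm, mul_smul_comm, smul_add, smul_smul, smul_smul, mul_comm (X i.rev)]
  have hshift : ∑ i, (a i * i.val) • (X (i - 1) * X i.rev) =
      ∑ j, (a (j + 1) * (j + 1).val) • (X j * X (j.rev - 1) : Poly n) :=
    (Fintype.sum_equiv (Equiv.addRight 1) _ _ fun j => by
      simp [Fin.rev_add, mul_comm]).symm
  rw [hexpand, hshift, ← Finset.sum_add_distrib]
  refine Finset.sum_eq_zero fun j _ => ?_
  rw [← add_smul, hcoeff, zero_smul]

theorem quadric_ne_zero (hn : Even n) : quadric n ≠ 0 := by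
  obtain ⟨r, rfl⟩ := hn
  set i₀ : Fin (r + r + 1) := ⟨r, by omega⟩
  have hrev : i₀.rev = i₀ := Fin.ext (by simp [i₀, Fin.val_rev])
  intro h
  have := congrArg (eval (Pi.single i₀ 1)) h
  rw [quadric, map_sum, Finset.sum_eq_single i₀, map_zero] at this
  · simp [hrev, i₀] at this
    exact (Nat.choose_pos (by omega)).ne' this
  · intro i _ hi
    simp [Pi.single_apply, hi]
  · simp

variable (n k) in
def lowering (c : ℤ) : weightSpace n k c →ₗ[ℚ] weightSpace n k (c - 1) :=
  (E n).toLinearMap.restrict fun _ => E_mem_weightSpace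

theorem sub_le_finrank_ker_lowering (c : ℤ) :
    (pZ k n c : ℤ) - pZ k n (c - 1) ≤ finrank ℚ (LinearMap.ker (lowering n k c)) := by
  have hrank := LinearMap.finrank_range_add_finrank_ker (lowering n k c)
  have hrange := Submodule.finrank_le (LinearMap.range (lowering n k c))
  rw [finrank_weightSpace] at hrank hrange
  omega

theorem finrank_ker_lowering_eq (hc : 2 * c ≤ n * k) :
    (finrank ℚ (LinearMap.ker (lowering n k c)) : ℤ) = pZ k n c - pZ k n (c - 1) := by
  have hsurj : Function.Surjective (lowering n k c) := fun y => by
    have hlt : 2 * ((c - 1 : ℤ) : ℚ) < n * k := by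
      have : (2 * c : ℚ) ≤ n * k := by exact_mod_cast hc
      push_cast
      linarith
    obtain ⟨x, hx, hxy⟩ := surjOn_of_commutator_eq_smul (E n).toLinearMap (F n).toLinearMap
      (weightSpace n k) _ (fun _ _ => E_mem_weightSpace) (fun _ _ => F_mem_weightSpace)
      (fun _ _ => E_F_sub_F_E) (fun _ => weightSpace_eq_bot_of_neg) hlt y.2
    rw [sub_add_cancel] at hx
    exact ⟨⟨x, hx⟩, Subtype.ext hxy⟩
  have hrank := LinearMap.finrank_range_add_finrank_ker (lowering n k c)
  rw [LinearMap.range_eq_top.mpr hsurj, finrank_top, finrank_weightSpace,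
    finrank_weightSpace] at hrank
  omega

theorem finrank_ker_lowering_le (hn : Even n) (c : ℤ) :
    finrank ℚ (LinearMap.ker (lowering n k c)) ≤
      finrank ℚ (LinearMap.ker (lowering n (k + 2) (c + n))) := by
  have hmul : ∀ x ∈ weightSpace n k c, quadric n * x ∈ weightSpace n (k + 2) (c + n) :=
    fun x hx => by
      have := IsWeightedHomogeneous.mul quadric_mem_weightSpace hx
      rwa [Prod.mk_add_mk, add_comm 2 k, add_comm (n : ℤ) c] at this
  let mulQ := (LinearMap.mulLeft ℚ (quadric n)).restrict hmul
  have hker : ∀ x ∈ LinearMap.ker (lowering n k c),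
      mulQ x ∈ LinearMap.ker (lowering n (k + 2) (c + n)) := fun x hx => by
    rw [LinearMap.mem_ker] at hx ⊢
    have hx' : E n x = 0 := congrArg Subtype.val hx
    refine Subtype.ext (show E n (quadric n * x) = 0 from ?_)
    rw [Derivation.leibniz, hx', E_quadric, smul_zero, smul_zero, add_zero]
  refine LinearMap.finrank_le_finrank_of_injective (f := mulQ.restrict hker) fun x y hxy => ?_
  exact Subtype.ext (Subtype.ext
    (mul_left_cancel₀ (quadric_ne_zero hn) (congrArg (fun z => z.1.1) hxy)))

end Sl2

end

theorem F_unimodal_general (n k m : ℕ) (hn : Even n) (hk : 2 ≤ k) (hm : 2 * m ≤ n * k) :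
    (pZ (k - 2) n ((m : ℤ) - n) : ℤ) - pZ (k - 2) n ((m : ℤ) - n - 1) ≤
      (pZ k n m : ℤ) - pZ k n ((m : ℤ) - 1) := by
  obtain ⟨k, rfl⟩ := Nat.exists_eq_add_of_le' hk
  rw [Nat.add_sub_cancel]
  have hQ := Sl2.finrank_ker_lowering_le (k := k) hn ((m : ℤ) - n)
  rw [sub_add_cancel] at hQ
  calc _ ≤ (finrank ℚ (LinearMap.ker (Sl2.lowering n k (m - n))) : ℤ) :=
        Sl2.sub_le_finrank_ker_lowering _
    _ ≤ finrank ℚ (LinearMap.ker (Sl2.lowering n (k + 2) m)) := by exact_mod_cast hQ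
    _ = _ := Sl2.finrank_ker_lowering_eq (by exact_mod_cast hm)

/-- Reiner–Stanton unimodality of $F_{n,k}(q)$: for even $n$, $k ≥ 2$ and
$n ≤ m ≤ nk/2$, $p(k,n,m) - p(k,n,m-1) ≥ p(k-2,n,m-n) - p(k-2,n,m-n-1)$. -/
theorem F_unimodal (n k m : ℕ) (hn : Even n) (hk : 2 ≤ k) (hnm : n ≤ m)
    (hm : 2 * m ≤ n * k) :
    (pZ (k - 2) n ((m : ℤ) - n) : ℤ) - pZ (k - 2) n ((m : ℤ) - n - 1) ≤
      (pZ k n m : ℤ) - pZ k n ((m : ℤ) - 1) :=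
  F_unimodal_general n k m hn hk hm
end

section
/- Let n be even and k ≥ 2. The polynomial F_{n,k}(q) = [n+k choose k]_q − q^n [n+k−2 choose k−2]_q is symmetric: its coefficient of q^m equals its coefficient of q^{nk−m} for all 0 ≤ m ≤ nk. -/
lemma sum_map_sub {s : Multiset ℕ} {n : ℕ} (h : ∀ a ∈ s, a ≤ n) :
    (s.map (n - ·)).sum = Multiset.card s * n - s.sum := by
  induction s using Multiset.induction_on with
  | empty => simp
  | cons a s ih =>
    have ha : a ≤ n := h a (Multiset.mem_cons_self a s)
    have hs : ∀ b ∈ s, b ≤ n := fun b hb => h b (Multiset.mem_cons_of_mem hb)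
    have hsum : s.sum ≤ Multiset.card s * n := by
      simpa [smul_eq_mul] using Multiset.sum_le_card_nsmul s n hs
    simp only [Multiset.map_cons, Multiset.sum_cons, ih hs, Multiset.card_cons, Nat.succ_mul]
    omega

/-- Pad a bounded partition with zeros: bijection with multisets of exactly `k`
entries, each `≤ n`, summing to `m`. -/
def boxEquiv (k n m : ℕ) :
    {π : Nat.Partition m // Multiset.card π.parts ≤ k ∧ ∀ j ∈ π.parts, j ≤ n} ≃
    {s : Multiset ℕ // Multiset.card s = k ∧ (∀ j ∈ s, j ≤ n) ∧ s.sum = m} where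
  toFun := fun ⟨π, hc, hb⟩ =>
    ⟨π.parts + Multiset.replicate (k - Multiset.card π.parts) 0, by
      constructor
      · simp; omega
      constructor
      · intro j hj
        rcases Multiset.mem_add.1 hj with h | h
        · exact hb j h
        · simp [Multiset.eq_of_mem_replicate h]
      · simp [π.parts_sum]⟩
  invFun := fun ⟨s, hc, hb, hs⟩ =>
    ⟨⟨s.filter (0 < ·), fun {i} hi => (Multiset.mem_filter.1 hi).2, by
        have h0 : (s.filter (fun a => ¬ 0 < a)).sum = 0 :=
          Multiset.sum_eq_zero (fun a ha => by
            have := (Multiset.mem_filter.1 ha).2; omega)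
        have := Multiset.filter_add_not (fun a => 0 < a) s
        calc (s.filter (0 < ·)).sum
            = (s.filter (0 < ·)).sum + (s.filter (fun a => ¬ 0 < a)).sum := by rw [h0, add_zero]
          _ = s.sum := by rw [← Multiset.sum_add, this]
          _ = m := hs⟩,
      by
      constructor
      · calc Multiset.card (s.filter (0 < ·)) ≤ Multiset.card s := Multiset.card_le_card (Multiset.filter_le _ s)
          _ = k := hc
      · intro j hj; exact hb j (Multiset.mem_of_mem_filter hj)⟩
  left_inv := by
    rintro ⟨π, hc, hb⟩
    ext1
    apply Nat.Partition.ext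
    simp only
    rw [Multiset.filter_add]
    have h1 : π.parts.filter (0 < ·) = π.parts :=
      Multiset.filter_eq_self.2 (fun a ha => π.parts_pos ha)
    have h2 : (Multiset.replicate (k - Multiset.card π.parts) 0).filter (0 < ·) = 0 :=
      Multiset.filter_eq_nil.2 (fun a ha => by simp [Multiset.eq_of_mem_replicate ha])
    rw [h1, h2, add_zero]
  right_inv := by
    rintro ⟨s, hc, hb, hs⟩
    ext1
    simp only
    have hsplit := Multiset.filter_add_not (fun a => 0 < a) s
    have hrep : s.filter (fun a => ¬ 0 < a) =
        Multiset.replicate (Multiset.card (s.filter (fun a => ¬ 0 < a))) 0 :=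
      (Multiset.eq_replicate_card).2 (fun b hb => by
        have := (Multiset.mem_filter.1 hb).2; omega)
    have hcard : Multiset.card (s.filter (fun a => 0 < a)) +
        Multiset.card (s.filter (fun a => ¬ 0 < a)) = k := by
      rw [← Multiset.card_add, hsplit, hc]
    have : k - Multiset.card (s.filter (0 < ·)) =
        Multiset.card (s.filter (fun a => ¬ 0 < a)) := by omega
    rw [this, ← hrep, hsplit]

/-- Complementation in the `k × n` box. -/
def complEquiv (k n m : ℕ) (hm : m ≤ n * k) :
    {s : Multiset ℕ // Multiset.card s = k ∧ (∀ j ∈ s, j ≤ n) ∧ s.sum = m} ≃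
    {s : Multiset ℕ // Multiset.card s = k ∧ (∀ j ∈ s, j ≤ n) ∧ s.sum = n * k - m} where
  toFun := fun ⟨s, hc, hb, hs⟩ =>
    ⟨s.map (n - ·), by
      refine ⟨by simp [hc], fun j hj => ?_, ?_⟩
      · obtain ⟨a, _, rfl⟩ := Multiset.mem_map.1 hj; omega
      · rw [sum_map_sub hb, hc, hs, Nat.mul_comm]⟩
  invFun := fun ⟨s, hc, hb, hs⟩ =>
    ⟨s.map (n - ·), by
      refine ⟨by simp [hc], fun j hj => ?_, ?_⟩
      · obtain ⟨a, _, rfl⟩ := Multiset.mem_map.1 hj; omega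
      · rw [sum_map_sub hb, hc, hs, Nat.mul_comm]; omega⟩
  left_inv := by
    rintro ⟨s, hc, hb, hs⟩
    ext1
    simp only [Multiset.map_map, Function.comp]
    calc s.map (fun a => n - (n - a)) = s.map id :=
          Multiset.map_congr rfl (fun a ha => by have := hb a ha; simp only [id_eq]; omega)
      _ = s := Multiset.map_id s
  right_inv := by
    rintro ⟨s, hc, hb, hs⟩
    ext1
    simp only [Multiset.map_map, Function.comp]
    calc s.map (fun a => n - (n - a)) = s.map id :=
          Multiset.map_congr rfl (fun a ha => by have := hb a ha; simp only [id_eq]; omega)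
      _ = s := Multiset.map_id s

lemma p_symm (k n m : ℕ) (hm : m ≤ n * k) : p k n m = p k n (n * k - m) :=
  Fintype.card_congr ((boxEquiv k n m).trans ((complEquiv k n m hm).trans
    (boxEquiv k n (n * k - m)).symm))

open Polynomial in
/-- The Gaussian binomial coefficient $[n+k, k]_q$ as a polynomial in $q$,
via its partition generating-function description. -/
noncomputable def gauss (n k : ℕ) : Polynomial ℤ :=
  ∑ m ∈ Finset.range (n * k + 1), Polynomial.C (p k n m : ℤ) * Polynomial.X ^ m

lemma gauss_coeff (n k m : ℕ) :
    (gauss n k).coeff m = if m ≤ n * k then (p k n m : ℤ) else 0 := by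
  rw [gauss, Polynomial.finset_sum_coeff]
  simp only [Polynomial.coeff_C_mul, Polynomial.coeff_X_pow, mul_ite, mul_one, mul_zero]
  rw [Finset.sum_ite_eq (Finset.range (n * k + 1)) m (fun i => (p k n i : ℤ))]
  simp [Nat.lt_succ_iff]

open Polynomial in
/-- For even $n$ and $k ≥ 2$, the polynomial
$F_{n,k}(q) = [n+k,k]_q - q^n[n+k-2,k-2]_q$ is symmetric. -/
theorem F_symmetric (n k : ℕ) (hn : Even n) (hk : 2 ≤ k) :
    ∀ m : ℕ, m ≤ n * k →
      (gauss n k - Polynomial.X ^ n * gauss n (k - 2)).coeff m =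
      (gauss n k - Polynomial.X ^ n * gauss n (k - 2)).coeff (n * k - m) := by
  intro m hm
  have hk2 : k - 2 + 2 = k := by omega
  have hA : n * k = n * (k - 2) + 2 * n := by
    conv_lhs => rw [← hk2]; ring_nf
    ring
  simp only [Polynomial.coeff_sub, Polynomial.X_pow_mul, Polynomial.coeff_mul_X_pow',
    gauss_coeff, if_pos hm, if_pos (Nat.sub_le (n * k) m)]
  rw [p_symm k n m hm]
  congr 1
  by_cases h : n ≤ m ∧ m - n ≤ n * (k - 2)
  · have hc1 : n ≤ n * k - m := by omega
    have hc2 : n * k - m - n ≤ n * (k - 2) := by omega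
    have heq : n * (k - 2) - (m - n) = n * k - m - n := by omega
    rw [if_pos h.1, if_pos h.2, if_pos hc1, if_pos hc2, p_symm (k - 2) n (m - n) h.2, heq]
  · by_cases h1 : n ≤ m
    · have h2 : ¬ m - n ≤ n * (k - 2) := fun h2 => h ⟨h1, h2⟩
      have h3 : ¬ n ≤ n * k - m := by omega
      rw [if_pos h1, if_neg h2, if_neg h3]
    · by_cases h3 : n ≤ n * k - m
      · have h4 : ¬ n * k - m - n ≤ n * (k - 2) := by omega
        rw [if_neg h1, if_pos h3, if_neg h4]
      · rw [if_neg h1, if_neg h3]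
end

section
/- The polynomials I_1 = 3a_1^2a_2^2 − 4a_1^3a_3 − 2a_0a_1a_2a_3 + 3a_0^2a_3^2 + 4a_0a_1^2a_4 − 4a_0^2a_2a_4 and I_2 = a_0a_2^3 − 2a_0a_1a_2a_3 + a_0^2a_3^2 + a_0a_1^2a_4 − a_0^2a_2a_4 are both annihilated by D = a_0 ∂/∂a_1 + 2a_1 ∂/∂a_2 + 3a_2 ∂/∂a_3 + 4a_3 ∂/∂a_4, and they are linearly independent over ℚ. -/
open MvPolynomial

/-- The operator `D = a_0 ∂/∂a_1 + 2a_1 ∂/∂a_2 + 3a_2 ∂/∂a_3 + 4a_3 ∂/∂a_4`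
for the binary quartic form, with `X i = a_i`. -/
noncomputable def D (f : MvPolynomial (Fin 5) ℚ) : MvPolynomial (Fin 5) ℚ :=
  X 0 * pderiv 1 f + (2 : ℚ) • (X 1 * pderiv 2 f) +
    (3 : ℚ) • (X 2 * pderiv 3 f) + (4 : ℚ) • (X 3 * pderiv 4 f)

noncomputable def I₁ : MvPolynomial (Fin 5) ℚ :=
  (3 : ℚ) • (X 1 ^ 2 * X 2 ^ 2) - (4 : ℚ) • (X 1 ^ 3 * X 3) -
    (2 : ℚ) • (X 0 * X 1 * X 2 * X 3) + (3 : ℚ) • (X 0 ^ 2 * X 3 ^ 2) +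
    (4 : ℚ) • (X 0 * X 1 ^ 2 * X 4) - (4 : ℚ) • (X 0 ^ 2 * X 2 * X 4)

noncomputable def I₂ : MvPolynomial (Fin 5) ℚ :=
  X 0 * X 2 ^ 3 - (2 : ℚ) • (X 0 * X 1 * X 2 * X 3) + X 0 ^ 2 * X 3 ^ 2 +
    X 0 * X 1 ^ 2 * X 4 - X 0 ^ 2 * X 2 * X 4

private lemma pdN (i : Fin 5) (n : ℕ) [n.AtLeastTwo] :
    pderiv i (no_index (OfNat.ofNat n) : MvPolynomial (Fin 5) ℚ) = 0 := by
  rw [← map_ofNat (C : ℚ →+* MvPolynomial (Fin 5) ℚ) n, pderiv_C]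

set_option maxHeartbeats 2000000 in
private lemma DI₁ : D I₁ = 0 := by
  simp only [D, I₁, smul_eq_C_mul, map_ofNat, map_sub, map_add, pderiv_mul, pderiv_pow,
    pderiv_X, pdN, Pi.single_apply]
  simp
  ring

set_option maxHeartbeats 2000000 in
private lemma DI₂ : D I₂ = 0 := by
  simp only [D, I₂, smul_eq_C_mul, map_ofNat, map_sub, map_add, pderiv_mul, pderiv_pow,
    pderiv_X, pdN, Pi.single_apply]
  simp
  ring

/-- `I₁` and `I₂` are linearly independent semi-invariants of the binary
quartic form (of degree 4 and weight 6). -/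
theorem I₁_I₂_semiinvariants_linearIndependent :
    D I₁ = 0 ∧ D I₂ = 0 ∧ LinearIndependent ℚ ![I₁, I₂] := by
  refine ⟨DI₁, DI₂, ?_⟩
  rw [LinearIndependent.pair_iff]
  intro s t h
  have h1 := congrArg (eval ![0, 1, 1, 0, 0]) h
  have h2 := congrArg (eval ![1, 0, 1, 0, 0]) h
  simp [I₁, I₂, smul_eq_C_mul] at h1 h2
  constructor <;> linarith
end

section
/- Let k_1, k_2, n ≥ 0, 0 ≤ m_1 ≤ nk_1/2, 0 ≤ m_2 ≤ nk_2/2, and suppose dim S_n(k_1,m_1) = t_1 ≥ 1 and dim S_n(k_2,m_2) = t_2 ≥ 1, where S_n(k,m) is the space of semi-invariants of a binary n-form of degree k and weight m. Then dim S_n(k_1+k_2, m_1+m_2) ≥ t_1 + t_2 − 1. -/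
/-! Fix a monomial order. In a finite-dimensional space of polynomials, the leading exponents
of nonzero elements are exactly as many as the dimension (echelon form). Leading exponents add
under multiplication and semi-invariants multiply, so the leading exponents of
`S_n(k₁ + k₂, m₁ + m₂)` contain the sumset `A + B` of those of the two factors, and the
Cauchy–Davenport bound `|A + B| ≥ |A| + |B| - 1` in the ordered monoid of exponents gives
the claim. -/

open MvPolynomial

/-- Cayley's operator `D = Σ_{i=1}^n i a_{i-1} ∂/∂a_i` as a linear map. -/
noncomputable def Dlin (n : ℕ) :
    MvPolynomial (Fin (n + 1)) ℚ →ₗ[ℚ] MvPolynomial (Fin (n + 1)) ℚ :=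
  ∑ i : Fin (n + 1), (i.val : ℚ) •
    ((LinearMap.mulLeft ℚ
        (X (⟨i.val - 1, lt_of_le_of_lt (Nat.sub_le _ _) i.isLt⟩ : Fin (n + 1)))).comp
      (pderiv i).toLinearMap)

/-- The space `S_n(k,m)` of semi-invariants of a binary `n`-form of degree `k`
and weight `m`: polynomials in `a_0, …, a_n` homogeneous of degree `k`,
isobaric of weight `m`, and annihilated by `D`. -/
noncomputable def S (n k m : ℕ) : Submodule ℚ (MvPolynomial (Fin (n + 1)) ℚ) :=
  homogeneousSubmodule (Fin (n + 1)) ℚ k ⊓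
    weightedHomogeneousSubmodule ℚ (fun i : Fin (n + 1) => (i.val : ℕ)) m ⊓
    LinearMap.ker (Dlin n)

open Finset in
theorem MonomialOrder.linearIndependent_of_injective_degree {σ R ι : Type*} [CommRing R]
    [NoZeroDivisors R] (m : MonomialOrder σ) {f : ι → MvPolynomial σ R} (hf : ∀ i, f i ≠ 0)
    (hinj : Function.Injective fun i => m.degree (f i)) :
    LinearIndependent R f := by
  classical
  rw [linearIndependent_iff]
  intro l hl
  by_contra hl0
  obtain ⟨i₀, hi₀, hmax⟩ := l.support.exists_max_image (fun i => m.toSyn (m.degree (f i)))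
    (Finsupp.support_nonempty_iff.2 hl0)
  have hcoeff := congrArg (coeff (m.degree (f i₀))) hl
  rw [Finsupp.linearCombination_apply, Finsupp.sum, coeff_sum, coeff_zero,
    sum_eq_single_of_mem i₀ hi₀, coeff_smul, smul_eq_mul] at hcoeff
  · exact mul_ne_zero (Finsupp.mem_support_iff.1 hi₀) (m.coeff_degree_ne_zero_iff.2 (hf i₀)) hcoeff
  · intro j hj hji
    rw [coeff_smul, m.coeff_eq_zero_of_lt, smul_zero]
    exact (hmax j hj).lt_of_ne fun h => hji (hinj (m.toSyn.injective h))

namespace MonomialOrder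

open Module Pointwise

variable {σ K : Type*} [Field K] (m : MonomialOrder σ)

/-- Taken in `m.syn`, where addition and the monomial order live on the same type. -/
def leadingDegrees (V : Submodule K (MvPolynomial σ K)) : Set m.syn :=
  {d | ∃ p ∈ V, p ≠ 0 ∧ m.toSyn (m.degree p) = d}

theorem card_le_finrank_of_subset_leadingDegrees {V : Submodule K (MvPolynomial σ K)}
    [FiniteDimensional K V] {F : Finset m.syn} (hF : ↑F ⊆ m.leadingDegrees V) :
    F.card ≤ finrank K V := by
  choose p hpV hp0 hpd using fun d : F => hF d.2
  have hli : LinearIndependent K fun d : F => (⟨p d, hpV d⟩ : V) :=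
    LinearIndependent.of_comp V.subtype <| m.linearIndependent_of_injective_degree hp0
      fun d e h => Subtype.ext <| by rw [← hpd, ← hpd]; exact congrArg m.toSyn h
  simpa using hli.fintype_card_le_finrank

theorem leadingDegrees_finite (V : Submodule K (MvPolynomial σ K)) [FiniteDimensional K V] :
    (m.leadingDegrees V).Finite := by
  by_contra hinf
  obtain ⟨F, hF, hcard⟩ := Set.Infinite.exists_subset_card_eq hinf (finrank K V + 1)
  have := m.card_le_finrank_of_subset_leadingDegrees hF
  omega

/-- A nonzero element of `V` has a nonzero coefficient at its leading exponent, so reading off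
the coefficients at `leadingDegrees V` is injective on `V`. -/
theorem finrank_le_ncard_leadingDegrees (V : Submodule K (MvPolynomial σ K))
    (hfin : (m.leadingDegrees V).Finite) :
    finrank K V ≤ (m.leadingDegrees V).ncard := by
  have := hfin.fintype
  let coeffs : V →ₗ[K] (m.leadingDegrees V → K) :=
    LinearMap.pi fun d => (lcoeff K (m.toSyn.symm d)).comp V.subtype
  have hinj : Function.Injective coeffs := by
    rw [← LinearMap.ker_eq_bot, Submodule.eq_bot_iff]
    rintro ⟨p, hpV⟩ hp
    by_contra hp0
    have hp0' : p ≠ 0 := fun h => hp0 (Subtype.ext h)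
    have := congrFun (LinearMap.mem_ker.1 hp) ⟨m.toSyn (m.degree p), p, hpV, hp0', rfl⟩
    simp [coeffs, m.coeff_degree_ne_zero_iff.2 hp0'] at this
  calc finrank K V ≤ finrank K (m.leadingDegrees V → K) :=
        LinearMap.finrank_le_finrank_of_injective hinj
    _ = (m.leadingDegrees V).ncard := by
        rw [Module.finrank_fintype_fun_eq_card, Fintype.card_eq_nat_card, Nat.card_coe_set_eq]

theorem ncard_leadingDegrees (V : Submodule K (MvPolynomial σ K)) [FiniteDimensional K V] :
    (m.leadingDegrees V).ncard = finrank K V := by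
  have hfin := m.leadingDegrees_finite V
  refine le_antisymm ?_ (m.finrank_le_ncard_leadingDegrees V hfin)
  rw [Set.ncard_eq_toFinset_card _ hfin]
  exact m.card_le_finrank_of_subset_leadingDegrees (by simp)

theorem leadingDegrees_add_subset {V W U : Submodule K (MvPolynomial σ K)}
    (hmul : ∀ p ∈ V, ∀ q ∈ W, p * q ∈ U) :
    m.leadingDegrees V + m.leadingDegrees W ⊆ m.leadingDegrees U := by
  rintro _ ⟨_, ⟨p, hpV, hp0, rfl⟩, _, ⟨q, hqW, hq0, rfl⟩, rfl⟩
  exact ⟨p * q, hmul p hpV q hqW, mul_ne_zero hp0 hq0, by rw [m.degree_mul hp0 hq0, map_add]⟩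

end MonomialOrder

open Module Pointwise in
theorem MvPolynomial.finrank_add_finrank_sub_one_le {σ K : Type*} [Field K] [LinearOrder σ]
    [WellFoundedGT σ] {V W U : Submodule K (MvPolynomial σ K)}
    [FiniteDimensional K V] [FiniteDimensional K W] [FiniteDimensional K U]
    (hV : 0 < finrank K V) (hW : 0 < finrank K W) (hmul : ∀ p ∈ V, ∀ q ∈ W, p * q ∈ U) :
    finrank K V + finrank K W - 1 ≤ finrank K U := by
  classical
  let m : MonomialOrder σ := .lex
  set A := (m.leadingDegrees_finite V).toFinset
  set B := (m.leadingDegrees_finite W).toFinset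
  have hA : A.card = finrank K V := by
    rw [← m.ncard_leadingDegrees V, Set.ncard_eq_toFinset_card _ (m.leadingDegrees_finite V)]
  have hB : B.card = finrank K W := by
    rw [← m.ncard_leadingDegrees W, Set.ncard_eq_toFinset_card _ (m.leadingDegrees_finite W)]
  calc finrank K V + finrank K W - 1 = A.card + B.card - 1 := by rw [hA, hB]
    _ ≤ (A + B).card := cauchy_davenport_add_of_linearOrder_isCancelAdd
        (Finset.card_pos.1 (hA ▸ hV)) (Finset.card_pos.1 (hB ▸ hW))
    _ ≤ finrank K U := m.card_le_finrank_of_subset_leadingDegrees <| by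
        simpa [A, B] using m.leadingDegrees_add_subset hmul

theorem Dlin_mul (n : ℕ) (p q : MvPolynomial (Fin (n + 1)) ℚ) :
    Dlin n (p * q) = p * Dlin n q + Dlin n p * q := by
  simp only [Dlin, LinearMap.sum_apply, LinearMap.smul_apply, LinearMap.comp_apply,
    LinearMap.mulLeft_apply, Derivation.coeFn_coe, pderiv_mul, Finset.mul_sum,
    Finset.sum_mul, ← Finset.sum_add_distrib, smul_eq_C_mul]
  exact Finset.sum_congr rfl fun i _ => by ring

theorem mul_mem_S {n k₁ m₁ k₂ m₂ : ℕ} {p q : MvPolynomial (Fin (n + 1)) ℚ}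
    (hp : p ∈ S n k₁ m₁) (hq : q ∈ S n k₂ m₂) : p * q ∈ S n (k₁ + k₂) (m₁ + m₂) := by
  obtain ⟨⟨hp_hom, hp_wt⟩, hp_ker⟩ := hp
  obtain ⟨⟨hq_hom, hq_wt⟩, hq_ker⟩ := hq
  refine ⟨⟨IsHomogeneous.mul hp_hom hq_hom, IsWeightedHomogeneous.mul hp_wt hq_wt⟩, ?_⟩
  rw [SetLike.mem_coe, LinearMap.mem_ker] at hp_ker hq_ker ⊢
  rw [Dlin_mul, hp_ker, hq_ker, mul_zero, zero_mul, add_zero]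

instance (n k m : ℕ) : FiniteDimensional ℚ (S n k m) :=
  Submodule.finiteDimensional_of_le fun _ hp =>
    (mem_restrictTotalDegree _ _ _).2 (IsHomogeneous.totalDegree_le hp.1.1)

theorem dim_semiinvariants_product_general (n k₁ k₂ m₁ m₂ t₁ t₂ : ℕ)
    (ht₁ : 1 ≤ t₁) (ht₂ : 1 ≤ t₂)
    (hd₁ : Module.finrank ℚ (S n k₁ m₁) = t₁)
    (hd₂ : Module.finrank ℚ (S n k₂ m₂) = t₂) :
    t₁ + t₂ - 1 ≤ Module.finrank ℚ (S n (k₁ + k₂) (m₁ + m₂)) := by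
  subst hd₁ hd₂
  exact finrank_add_finrank_sub_one_le ht₁ ht₂ fun _ hp _ hq => mul_mem_S hp hq

/-- If `dim S_n(k₁,m₁) = t₁ ≥ 1` and `dim S_n(k₂,m₂) = t₂ ≥ 1`, with
`m₁ ≤ nk₁/2` and `m₂ ≤ nk₂/2`, then `dim S_n(k₁+k₂, m₁+m₂) ≥ t₁ + t₂ - 1`. -/
theorem dim_semiinvariants_product (n k₁ k₂ m₁ m₂ t₁ t₂ : ℕ)
    (hm₁ : 2 * m₁ ≤ n * k₁) (hm₂ : 2 * m₂ ≤ n * k₂)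
    (ht₁ : 1 ≤ t₁) (ht₂ : 1 ≤ t₂)
    (hd₁ : Module.finrank ℚ (S n k₁ m₁) = t₁)
    (hd₂ : Module.finrank ℚ (S n k₂ m₂) = t₂) :
    t₁ + t₂ - 1 ≤ Module.finrank ℚ (S n (k₁ + k₂) (m₁ + m₂)) :=
  dim_semiinvariants_product_general n k₁ k₂ m₁ m₂ t₁ t₂ ht₁ ht₂ hd₁ hd₂
end
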